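/- arXiv:2106.05513 — 2 statements merged into one kernel-verified Lean document; each statement's English description precedes it below -/
import Mathlib

section
/- Degree scaling in expander replacement: given reals d(v) ≥ 1 for v ∈ V, there exists a multigraph H on V (possibly with self-loops counted in degrees) such that H is an α₀-expander for a universal constant α₀ > 0 and d(v) ≤ deg_H(v) ≤ 9·d(v) for all v, obtained by contracting a bounded-degree expander on n = Σ⌈d(v)⌉ vertices along a partition into blocks of sizes ⌈d(v)⌉. In particular, for any partition of the vertex set of a 9-regular-degree-bounded α₀-expander H_n into blocks U_v with |U_v| = m(v) ≥ 1, the contraction H satisfies m(v) ≤ deg_H(v) ≤ 9·m(v). -/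
open Finset

/-- Degree scaling in expander replacement: There is a universal constant
`α₀ > 0` such that for any finite vertex set `V` and any reals `d v ≥ 1` there is a
weighted multigraph `H` on `V` (self-loops allowed, counted in degrees) which is an
`α₀`-expander and satisfies `d v ≤ deg_H v ≤ 9·d v` for all `v`.  In particular, for any
graph `H_n` all of whose vertex degrees lie in `[1,9]` and any partition of its vertex
set into nonempty blocks `U_v = π⁻¹(v)` of sizes `m v`, the contracted degrees satisfy
`m v ≤ deg_H v = vol_{H_n}(U_v) ≤ 9·m v`. -/
theorem expander_with_prescribed_degrees :
    (∃ α₀ : ℝ, 0 < α₀ ∧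
      ∀ (V : Type) (_ : Fintype V) (_ : DecidableEq V) (d : V → ℝ),
        (∀ v, 1 ≤ d v) →
        ∃ w : V → V → ℝ,
          (∀ u v, 0 ≤ w u v) ∧ (∀ u v, w u v = w v u) ∧
          -- H is an α₀-expander (degrees/volumes include self-loop weights):
          (∀ S : Finset V, S.Nonempty → Sᶜ.Nonempty →
            α₀ * min (∑ x ∈ S, ∑ y : V, w x y) (∑ x ∈ Sᶜ, ∑ y : V, w x y)
              ≤ ∑ x ∈ S, ∑ y ∈ Sᶜ, w x y) ∧
          -- degree bounds:
          (∀ v : V, d v ≤ ∑ u : V, w v u ∧ ∑ u : V, w v u ≤ 9 * d v))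
    ∧
    -- the "in particular" contraction bound:
    (∀ (Vn V : Type) (_ : Fintype Vn) (_ : Fintype V) (_ : DecidableEq V)
        (deg : Vn → ℝ) (_ : ∀ x, 1 ≤ deg x) (_ : ∀ x, deg x ≤ 9)
        (π : Vn → V) (_ : Function.Surjective π) (v : V),
        ((Finset.univ.filter (fun x => π x = v)).card : ℝ)
            ≤ ∑ x ∈ Finset.univ.filter (fun x => π x = v), deg x
        ∧ ∑ x ∈ Finset.univ.filter (fun x => π x = v), deg x
            ≤ 9 * ((Finset.univ.filter (fun x => π x = v)).card : ℝ)) := by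
  constructor
  · refine ⟨1/2, by norm_num, ?_⟩
    intro V _ _ d hd
    set D : ℝ := ∑ v : V, d v with hD
    refine ⟨fun u v => d u * d v / D, ?_, ?_, ?_, ?_⟩
    · intro u v
      have hD0 : 0 ≤ D := Finset.sum_nonneg fun v _ => le_trans zero_le_one (hd v)
      exact div_nonneg (mul_nonneg (le_trans zero_le_one (hd u)) (le_trans zero_le_one (hd v))) hD0
    · intro u v; ring
    · intro S hS hSc
      have hVne : Nonempty V := ⟨hS.choose⟩
      have hdeg : ∀ A : Finset V, ∑ x ∈ A, ∑ y : V, d x * d y / D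
          = (∑ x ∈ A, d x) * D / D := by
        intro A
        rw [Finset.sum_mul, Finset.sum_div]
        congr 1; funext x
        rw [Finset.mul_sum, Finset.sum_div]
      have ha : (0:ℝ) < ∑ x ∈ S, d x :=
        lt_of_lt_of_le zero_lt_one (le_trans (hd hS.choose)
          (Finset.single_le_sum (fun v _ => le_trans zero_le_one (hd v)) hS.choose_spec))
      have hb : (0:ℝ) < ∑ x ∈ Sᶜ, d x :=
        lt_of_lt_of_le zero_lt_one (le_trans (hd hSc.choose)
          (Finset.single_le_sum (fun v _ => le_trans zero_le_one (hd v)) hSc.choose_spec))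
      have hab : (∑ x ∈ S, d x) + (∑ x ∈ Sᶜ, d x) = D := by
        rw [hD, ← Finset.sum_add_sum_compl S]
      have hDpos : 0 < D := by rw [← hab]; linarith
      have hcut : ∑ x ∈ S, ∑ y ∈ Sᶜ, d x * d y / D
          = (∑ x ∈ S, d x) * (∑ x ∈ Sᶜ, d x) / D := by
        rw [Finset.sum_mul, Finset.sum_div]
        congr 1; funext x
        rw [Finset.mul_sum, Finset.sum_div]
      rw [hcut, hdeg S, hdeg Sᶜ,
        mul_div_cancel_right₀ _ (ne_of_gt hDpos),
        mul_div_cancel_right₀ _ (ne_of_gt hDpos)]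
      set a := ∑ x ∈ S, d x
      set b := ∑ x ∈ Sᶜ, d x
      rcases le_total a b with h | h
      · rw [min_eq_left h, le_div_iff₀ hDpos]
        nlinarith
      · rw [min_eq_right h, le_div_iff₀ hDpos]
        nlinarith
    · intro v
      have hVne : Nonempty V := ⟨v⟩
      have hDpos : 0 < D := by
        rw [hD]
        exact lt_of_lt_of_le zero_lt_one (le_trans (hd v)
          (Finset.single_le_sum (fun u _ => le_trans zero_le_one (hd u)) (Finset.mem_univ v)))
      have : ∑ u : V, d v * d u / D = d v := by
        rw [← Finset.sum_div, ← Finset.mul_sum, ← hD,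
          mul_div_assoc, div_self (ne_of_gt hDpos), mul_one]
      rw [this]
      constructor
      · exact le_rfl
      · nlinarith [hd v]
  · intro Vn V _ _ _ deg hdeg1 hdeg9 π hπ v
    constructor
    · calc ((Finset.univ.filter (fun x => π x = v)).card : ℝ)
          = ∑ _x ∈ Finset.univ.filter (fun x => π x = v), (1:ℝ) := by
            rw [Finset.sum_const, nsmul_eq_mul, mul_one]
        _ ≤ ∑ x ∈ Finset.univ.filter (fun x => π x = v), deg x :=
            Finset.sum_le_sum fun x _ => hdeg1 x
    · calc ∑ x ∈ Finset.univ.filter (fun x => π x = v), deg x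
          ≤ ∑ _x ∈ Finset.univ.filter (fun x => π x = v), (9:ℝ) :=
            Finset.sum_le_sum fun x _ => hdeg9 x
        _ = 9 * ((Finset.univ.filter (fun x => π x = v)).card : ℝ) := by
            rw [Finset.sum_const, nsmul_eq_mul, mul_comm]
end

section
/- (Symmetric difference of contracted cuts) Let G' be obtained from G by contracting each cluster U_j of a partition of V to a single vertex, and let S ⊆ V, S' a set of contracted vertices, with D_j = U_j \ S if u_j ∈ S' and D_j = U_j ∩ S otherwise. Then the symmetric difference (∂_G S) △ (∂_{G'} S') (viewing both as subsets of the surviving edge set of G) is contained in ∪_j ∂_G D_j. -/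
open Finset

/-- Symmetric difference of contracted cuts: Let `G'` be obtained from
`G` by contracting each cluster `U_j = π⁻¹(j)` to a single vertex, let `S ⊆ V`, let
`S'` be a set of contracted vertices, and set `D j = U_j \ S` if `j ∈ S'` and
`D j = U_j ∩ S` otherwise.  Then every surviving edge `(u,v)` (i.e. `π u ≠ π v`) lying
in the symmetric difference `(∂_G S) △ (∂_{G'} S')` — that is, crossing `S` but not
`S'`, or vice versa — lies in `∂_G (D j)` for some `j`. -/
theorem symmDiff_contracted_cuts_subset
    {V : Type*} [Fintype V] [DecidableEq V] {J : Type*} [Fintype J] [DecidableEq J]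
    (π : V → J) (S : Finset V) (S' : Finset J) (D : J → Finset V)
    (hD : ∀ j : J,
      (j ∈ S' → D j = (univ.filter (fun u => π u = j)) \ S) ∧
      (j ∉ S' → D j = (univ.filter (fun u => π u = j)) ∩ S)) :
    ∀ u v : V, π u ≠ π v →
      ¬ (((u ∈ S) ↔ (v ∈ S)) ↔ ((π u ∈ S') ↔ (π v ∈ S'))) →
      ∃ j : J, (u ∈ D j ∧ v ∉ D j) ∨ (v ∈ D j ∧ u ∉ D j) := by
  intro u v hne hsym
  have hmem : ∀ w : V, w ∈ D (π w) ↔ ((π w ∈ S' ∧ w ∉ S) ∨ (π w ∉ S' ∧ w ∈ S)) := by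
    intro w
    by_cases h : π w ∈ S'
    · rw [(hD (π w)).1 h]
      simp [h]
    · rw [(hD (π w)).2 h]
      simp [h]
  have hnotu : v ∉ D (π u) := by
    by_cases h : π u ∈ S'
    · rw [(hD (π u)).1 h]; simp [hne.symm]
    · rw [(hD (π u)).2 h]; simp [hne.symm]
  have hnotv : u ∉ D (π v) := by
    by_cases h : π v ∈ S'
    · rw [(hD (π v)).1 h]; simp [hne]
    · rw [(hD (π v)).2 h]; simp [hne]
  by_cases hu : u ∈ D (π u)
  · exact ⟨π u, Or.inl ⟨hu, hnotu⟩⟩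
  · refine ⟨π v, Or.inr ⟨?_, hnotv⟩⟩
    rw [hmem u] at hu
    rw [hmem v]
    tauto
end
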